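/- arXiv:2310.08229 — 3 statements merged into one kernel-verified Lean document; each statement's English description precedes it below -/
import Mathlib

section
/- Let S be a semigroup and let B ⊆ S be a subset such that ρ_B := Δ_S ∪ (B × B) is a congruence of S (here Δ_S is the diagonal relation). Then ρ_B is a modular element of the congruence lattice Cong(S); that is, σ₁ ∨ (ρ_B ∧ σ₂) = (σ₁ ∨ ρ_B) ∧ σ₂ for all congruences σ₁ ⊆ σ₂ of S. -/
/-! When every class of `ρ` but one (the class `B`) is a singleton, the join `σ ⊔ ρ` with any
congruence `σ` is just the relational product `σ ∘ ρ ∘ σ`: chaining two such products either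
passes through a trivial `ρ`-step, which `σ` absorbs, or through two `B`-steps, which merge
into one. Given `x (σ₁ ⊔ ρ) y` and `x σ₂ y` with `σ₁ ≤ σ₂`, write `x σ₁ u ρ v σ₁ y`; then
`u σ₂ v` as well, so the middle step lies in `ρ ⊓ σ₂`. -/

namespace Con

variable {M : Type*} [Mul M] {ρ : Con M} {B : Set M}

def reesSandwich (hρ : ∀ x y, ρ x y ↔ x = y ∨ (x ∈ B ∧ y ∈ B)) (σ : Con M) : Con M where
  r x y := ∃ u v, σ x u ∧ ρ u v ∧ σ v y
  iseqv :=
    { refl x := ⟨x, x, σ.refl x, ρ.refl x, σ.refl x⟩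
      symm := fun ⟨u, v, hxu, huv, hvy⟩ => ⟨v, u, σ.symm hvy, ρ.symm huv, σ.symm hxu⟩
      trans := by
        rintro x y z ⟨u, v, hxu, huv, hvy⟩ ⟨u', v', hyu', hu'v', hv'z⟩
        rcases (hρ u v).mp huv with rfl | ⟨hu, -⟩
        · exact ⟨u', v', σ.trans (σ.trans hxu hvy) hyu', hu'v', hv'z⟩
        rcases (hρ u' v').mp hu'v' with rfl | ⟨-, hv'⟩
        · exact ⟨u, v, hxu, huv, σ.trans hvy (σ.trans hyu' hv'z)⟩
        · exact ⟨u, v', hxu, (hρ u v').mpr (.inr ⟨hu, hv'⟩), hv'z⟩ }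
  mul' := fun ⟨u, v, hxu, huv, hvy⟩ ⟨u', v', hxu', huv', hvy'⟩ =>
    ⟨u * u', v * v', σ.mul hxu hxu', ρ.mul huv huv', σ.mul hvy hvy'⟩

theorem sup_iff_exists_of_rees (hρ : ∀ x y, ρ x y ↔ x = y ∨ (x ∈ B ∧ y ∈ B)) (σ : Con M)
    {x y : M} : (σ ⊔ ρ) x y ↔ ∃ u v, σ x u ∧ ρ u v ∧ σ v y := by
  constructor
  · refine fun hxy => sup_le (c := reesSandwich hρ σ) ?_ ?_ hxy
    · exact fun x y hxy => ⟨y, y, hxy, ρ.refl y, σ.refl y⟩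
    · exact fun x y hxy => ⟨x, y, σ.refl x, hxy, σ.refl y⟩
  · rintro ⟨u, v, hxu, huv, hvy⟩
    exact (σ ⊔ ρ).trans (le_sup_left (b := ρ) hxu)
      ((σ ⊔ ρ).trans (le_sup_right (a := σ) huv) (le_sup_left (b := ρ) hvy))

end Con

/-- Let `S` be a semigroup and `B ⊆ S` a subset such that `ρ_B := Δ_S ∪ (B × B)` is a
congruence of `S`.  Then `ρ_B` is a modular element of the congruence lattice of `S`:
`σ₁ ⊔ (ρ_B ⊓ σ₂) = (σ₁ ⊔ ρ_B) ⊓ σ₂` for all congruences `σ₁ ≤ σ₂`. -/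
theorem reesCongruence_modular {S : Type*} [Semigroup S] (B : Set S) (ρB : Con S)
    (hρB : ∀ x y : S, ρB x y ↔ x = y ∨ (x ∈ B ∧ y ∈ B)) :
    ∀ σ₁ σ₂ : Con S, σ₁ ≤ σ₂ → σ₁ ⊔ (ρB ⊓ σ₂) = (σ₁ ⊔ ρB) ⊓ σ₂ := by
  intro σ₁ σ₂ h
  refine le_antisymm (le_inf (sup_le_sup_left inf_le_left _) (sup_le h inf_le_right)) ?_
  rintro x y ⟨hxy₁, hxy₂⟩
  obtain ⟨u, v, hxu, huv, hvy⟩ := (Con.sup_iff_exists_of_rees hρB σ₁).mp hxy₁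
  have huv₂ : σ₂ u v := σ₂.trans (σ₂.symm (h hxu)) (σ₂.trans hxy₂ (σ₂.symm (h hvy)))
  set τ := σ₁ ⊔ ρB ⊓ σ₂
  have hσ₁ : σ₁ ≤ τ := le_sup_left
  exact τ.trans (hσ₁ hxu) (τ.trans (le_sup_right (a := σ₁) ⟨huv, huv₂⟩) (hσ₁ hvy))
end

section
/- Let S be a semigroup and B a subsemigroup of S with the diagonal congruence extension property: for every congruence σ of B, the relation σ ∪ Δ_S is a congruence of S. Then the map σ ↦ σ ∪ Δ_S is a lattice isomorphism from Cong(B) onto the interval [Δ_S, ρ_B] of Cong(S), where ρ_B = Δ_S ∪ (B × B); consequently Ht(Cong(S)) = Ht(Cong(B)) + Ht(Cong(S/ρ_B)) − 1, where S/ρ_B is the quotient semigroup. -/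
/-- The height of a partially ordered type: the supremum of the cardinalities
(= lengths) of chains in it. -/
noncomputable def orderHeight (α : Type*) [Preorder α] : ℕ∞ :=
  Set.chainHeight (Set.univ : Set α) (· < ·)

/-!
Restricting the congruences below `ρ_B` to `B` is an order embedding of `[Δ_S, ρ_B]` into
`Cong(B)`, and the diagonal extension property makes it onto.

For the heights, `ρ_B` is cancellable in `Cong(S)`: if `c ≤ d` have the same meet and the same
join with `ρ_B` then `c = d`, because `ρ_B` has a single nontrivial class and therefore
`c ⊔ ρ_B = c ∘ ρ_B ∘ c`. So `x ↦ (x ⊓ ρ_B, x ⊔ ρ_B)` is strictly monotone into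
`[Δ_S, ρ_B] × [ρ_B, ∇_S]`, and a nonempty chain with `n` elements in a product of two posets has
projections with at least `n + 1` elements in total. Conversely a chain below `ρ_B` and a chain
above it share at most `ρ_B`. Since `[ρ_B, ∇_S] ≅ Cong(S/ρ_B)`, this gives
`Ht(Cong(S)) + 1 = Ht(Cong(B)) + Ht(Cong(S/ρ_B))`.
-/

open Set

theorem orderHeight_coe {α : Type*} [Preorder α] (s : Set α) :
    orderHeight s = s.chainHeight (· < ·) :=
  chainHeight_coe_univ_lt s

theorem orderHeight_congr {α β : Type*} [Preorder α] [Preorder β] (e : α ≃o β) :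
    orderHeight α = orderHeight β := by
  rw [orderHeight, orderHeight, ← chainHeight_eq_of_relIso univ e.toRelIsoLT]
  congr
  exact image_univ_of_surjective e.surjective

theorem Monotone.isChain_lt_image {α β : Type*} [PartialOrder α] [PartialOrder β] {f : α → β}
    (hf : Monotone f) {s : Set α} (hs : IsChain (· < ·) s) : IsChain (· < ·) (f '' s) :=
  (hf.isChain_image (hs.mono_rel fun _ _ h => h.le)).lt_of_le

theorem IsChain.ncard_add_one_le_ncard_image_fst_add_ncard_image_snd
    {α β : Type*} [PartialOrder α] [PartialOrder β] {c : Set (α × β)} (hc : IsChain (· < ·) c)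
    (hfin : c.Finite) (hne : c.Nonempty) :
    c.ncard + 1 ≤ (Prod.fst '' c).ncard + (Prod.snd '' c).ncard := by
  induction hn : c.ncard generalizing c with
  | zero => exact absurd hn (ncard_pos hfin |>.2 hne).ne'
  | succ n ih =>
    rcases n with _ | n
    · obtain ⟨m, rfl⟩ := ncard_eq_one.1 hn
      simp
    obtain ⟨m, hm⟩ := hfin.exists_maximal hne
    have hlt : ∀ z ∈ c \ {m}, z < m := fun z ⟨hz, hzm⟩ =>
      (hc hz hm.1 hzm).resolve_right fun h => h.not_ge (hm.2 hz h.le)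
    have hn' : (c \ {m}).ncard = n + 1 := by
      have := ncard_sdiff_singleton_add_one hm.1 hfin
      omega
    have ih' := ih (hc.mono sdiff_subset) hfin.sdiff (nonempty_of_ncard_ne_zero (by omega)) hn'
    -- the maximum `m` of `c` contributes a new first or a new second coordinate
    have hnew : m.1 ∉ Prod.fst '' (c \ {m}) ∨ m.2 ∉ Prod.snd '' (c \ {m}) := by
      by_contra! ⟨⟨x, hx, hx1⟩, ⟨y, hy, hy2⟩⟩
      rcases (hc.mono_rel fun _ _ h => h.le).total hx.1 hy.1 with hxy | hyx
      · exact (hlt y hy).ne (Prod.ext (le_antisymm (hlt y hy).le.1 (hx1 ▸ hxy.1)) hy2)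
      · exact (hlt x hx).ne (Prod.ext hx1 (le_antisymm (hlt x hx).le.2 (hy2 ▸ hyx.2)))
    have hfst := ncard_le_ncard (image_mono (f := Prod.fst) (sdiff_subset (t := {m})))
      (hfin.image _)
    have hsnd := ncard_le_ncard (image_mono (f := Prod.snd) (sdiff_subset (t := {m})))
      (hfin.image _)
    have hstrict : (Prod.fst '' (c \ {m})).ncard + (Prod.snd '' (c \ {m})).ncard <
        (Prod.fst '' c).ncard + (Prod.snd '' c).ncard := by
      rcases hnew with h | h
      · exact Nat.add_lt_add_of_lt_of_le (ncard_lt_ncard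
          ⟨image_mono sdiff_subset, fun h' => h (h' ⟨m, hm.1, rfl⟩)⟩ (hfin.image _)) hsnd
      · exact Nat.add_lt_add_of_le_of_lt hfst (ncard_lt_ncard
          ⟨image_mono sdiff_subset, fun h' => h (h' ⟨m, hm.1, rfl⟩)⟩ (hfin.image _))
    omega

theorem chainHeight_Iic_add_chainHeight_Ici_le {α : Type*} [PartialOrder α] (a : α) :
    (Iic a).chainHeight (· < ·) + (Ici a).chainHeight (· < ·) ≤
      (univ : Set α).chainHeight (· < ·) + 1 := by
  have (s : Set α) : Nonempty {t // t ⊆ s ∧ IsChain (· < ·) t} := ⟨⟨∅, empty_subset _, .empty⟩⟩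
  rw [chainHeight_eq_iSup (Iic a), chainHeight_eq_iSup (Ici a)]
  refine ENat.iSup_add_iSup_le fun ⟨t₁, h₁, c₁⟩ ⟨t₂, h₂, c₂⟩ => ?_
  have hunion : IsChain (· < ·) (t₁ ∪ t₂) := isChain_union.2
    ⟨c₁, c₂, fun x hx y hy hne => Or.inl (lt_of_le_of_ne ((h₁ hx).trans (h₂ hy)) hne)⟩
  have hinter : (t₁ ∩ t₂).encard ≤ 1 :=
    (encard_le_encard fun z hz => le_antisymm (h₁ hz.1) (h₂ hz.2)).trans_eq (encard_singleton a)
  calc t₁.encard + t₂.encard = (t₁ ∪ t₂).encard + (t₁ ∩ t₂).encard :=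
        (encard_union_add_encard_inter t₁ t₂).symm
    _ ≤ _ := add_le_add (encard_le_chainHeight_of_isChain _ _ (subset_univ _) hunion) hinter

theorem chainHeight_univ_add_one_le {α : Type*} [Lattice α] {a : α}
    (ha : ∀ x y : α, x ≤ y → y ⊓ a ≤ x ⊓ a → y ⊔ a ≤ x ⊔ a → x = y) :
    (univ : Set α).chainHeight (· < ·) + 1 ≤
      (Iic a).chainHeight (· < ·) + (Ici a).chainHeight (· < ·) := by
  let f : α → α × α := fun x => (x ⊓ a, x ⊔ a)
  have hf : StrictMono f := fun x y hxy =>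
    lt_of_le_of_ne ⟨inf_le_inf_right a hxy.le, sup_le_sup_right hxy.le a⟩ fun h =>
      hxy.ne (ha x y hxy.le (congrArg Prod.fst h).ge (congrArg Prod.snd h).ge)
  refine ENat.forall_natCast_le_iff_le.1 fun n hn => ?_
  rcases n with _ | n
  · simp
  obtain ⟨t, -, ht, htc⟩ := exists_isChain_of_le_chainHeight n
    (by push_cast at hn; exact (ENat.add_le_add_iff_right ENat.one_ne_top).1 hn)
  rcases t.eq_empty_or_nonempty with rfl | hne
  · obtain rfl : n = 0 := by simpa [eq_comm] using ht
    exact (one_le_chainHeight_iff _ _ |>.2 nonempty_Iic).trans le_self_add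
  have htfin : t.Finite := finite_of_encard_eq_coe ht
  have hc : IsChain (· < ·) (f '' t) := htc.image_of_map_rel _ _ f fun _ _ h => hf h
  have hcard := hc.ncard_add_one_le_ncard_image_fst_add_ncard_image_snd (htfin.image f)
    (hne.image f)
  have htn : t.ncard = n := by exact_mod_cast htfin.cast_ncard_eq.trans ht
  have hinj : InjOn f t := fun x hx y hy hxy => by_contra fun hne =>
    (htc hx hy hne).elim (fun h => (hf h).ne hxy) fun h => (hf h).ne' hxy
  rw [hinj.ncard_image, htn] at hcard
  calc ((n + 1 : ℕ) : ℕ∞) ≤ (Prod.fst '' (f '' t)).encard + (Prod.snd '' (f '' t)).encard := by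
        rw [← ((htfin.image f).image _).cast_ncard_eq, ← ((htfin.image f).image _).cast_ncard_eq]
        exact_mod_cast hcard
    _ ≤ _ := by
      gcongr
      · refine encard_le_chainHeight_of_isChain _ _ ?_ (monotone_fst.isChain_lt_image hc)
        rintro _ ⟨_, ⟨x, -, rfl⟩, rfl⟩
        exact inf_le_right
      · refine encard_le_chainHeight_of_isChain _ _ ?_ (monotone_snd.isChain_lt_image hc)
        rintro _ ⟨_, ⟨x, -, rfl⟩, rfl⟩
        exact le_sup_right

theorem chainHeight_univ_add_one_eq {α : Type*} [Lattice α] {a : α}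
    (ha : ∀ x y : α, x ≤ y → y ⊓ a ≤ x ⊓ a → y ⊔ a ≤ x ⊔ a → x = y) :
    (univ : Set α).chainHeight (· < ·) + 1 =
      (Iic a).chainHeight (· < ·) + (Ici a).chainHeight (· < ·) :=
  (chainHeight_univ_add_one_le ha).antisymm (chainHeight_Iic_add_chainHeight_Ici_le a)

namespace Con

variable {M : Type*} [Mul M]

section SingleBlock

variable {B : Set M} {ρ : Con M}

/-- Since `ρ` has a single nontrivial class, the relational product `c ∘ ρ ∘ c` is already
transitive. -/
def supOfSingleBlock (hρ : ∀ x y, ρ x y ↔ x = y ∨ x ∈ B ∧ y ∈ B) (c : Con M) : Con M where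
  r x y := ∃ p q, c x p ∧ ρ p q ∧ c q y
  iseqv :=
    { refl x := ⟨x, x, c.refl x, ρ.refl x, c.refl x⟩
      symm := fun ⟨p, q, hxp, hpq, hqy⟩ => ⟨q, p, c.symm hqy, ρ.symm hpq, c.symm hxp⟩
      trans := by
        rintro x y z ⟨p, q, hxp, hpq, hqy⟩ ⟨p', q', hyp', hp'q', hq'z⟩
        have hqp' : c q p' := c.trans hqy hyp'
        rcases (hρ p q).1 hpq with rfl | ⟨hp, -⟩
        · exact ⟨p', q', c.trans hxp hqp', hp'q', hq'z⟩
        rcases (hρ p' q').1 hp'q' with rfl | ⟨-, hq'⟩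
        · exact ⟨p, q, hxp, hpq, c.trans hqp' hq'z⟩
        · exact ⟨p, q', hxp, (hρ p q').2 (Or.inr ⟨hp, hq'⟩), hq'z⟩ }
  mul' := fun ⟨p, q, hwp, hpq, hqx⟩ ⟨p', q', hyp', hp'q', hq'z⟩ =>
    ⟨p * p', q * q', c.mul hwp hyp', ρ.mul hpq hp'q', c.mul hqx hq'z⟩

theorem sup_eq_supOfSingleBlock (hρ : ∀ x y, ρ x y ↔ x = y ∨ x ∈ B ∧ y ∈ B) (c : Con M) :
    c ⊔ ρ = supOfSingleBlock hρ c := by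
  refine le_antisymm (sup_le ?_ ?_) ?_
  · exact fun x y h => ⟨y, y, h, ρ.refl y, c.refl y⟩
  · exact fun x y h => ⟨x, y, c.refl x, h, c.refl y⟩
  · rintro x y ⟨p, q, hxp, hpq, hqy⟩
    exact (c ⊔ ρ).trans (le_sup_left (a := c) hxp)
      ((c ⊔ ρ).trans (le_sup_right (b := ρ) hpq) (le_sup_left (a := c) hqy))

theorem eq_of_le_of_inf_le_of_sup_le (hρ : ∀ x y, ρ x y ↔ x = y ∨ x ∈ B ∧ y ∈ B)
    {c d : Con M} (hcd : c ≤ d) (hinf : d ⊓ ρ ≤ c ⊓ ρ) (hsup : d ⊔ ρ ≤ c ⊔ ρ) : c = d := by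
  refine hcd.antisymm fun x y hxy => ?_
  obtain ⟨p, q, hxp, hpq, hqy⟩ : supOfSingleBlock hρ c x y := by
    rw [← sup_eq_supOfSingleBlock hρ]
    exact hsup (le_sup_left (a := d) hxy)
  have hdpq : d p q := d.trans (d.symm (hcd hxp)) (d.trans hxy (d.symm (hcd hqy)))
  have hcpq : c p q := (hinf ⟨hdpq, hpq⟩).1
  exact c.trans hxp (c.trans hcpq hqy)

end SingleBlock

section Restrict

variable {B : Subsemigroup M} {ρ : Con M}

def restrict (B : Subsemigroup M) (c : Con M) : Con B :=
  c.comap (↑) fun _ _ => rfl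

theorem rel_iff_of_le (hρ : ∀ x y, ρ x y → x = y ∨ x ∈ B ∧ y ∈ B) {c : Con M} (hc : c ≤ ρ)
    (x y : M) : c x y ↔ x = y ∨ ∃ hx : x ∈ B, ∃ hy : y ∈ B, c.restrict B ⟨x, hx⟩ ⟨y, hy⟩ := by
  refine ⟨fun h => (hρ x y (hc h)).imp_right fun ⟨hx, hy⟩ => ⟨hx, hy, h⟩, ?_⟩
  rintro (rfl | ⟨_, _, h⟩)
  exacts [c.refl x, h]

def restrictIcc (hρ : ∀ x y, ρ x y → x = y ∨ x ∈ B ∧ y ∈ B) : Icc (⊥ : Con M) ρ ↪o Con B :=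
  OrderEmbedding.ofMapLEIff (fun c => (c : Con M).restrict B) fun c d =>
    ⟨fun h x y hxy => ((rel_iff_of_le hρ c.2.2 x y).1 hxy).elim (fun hxy => hxy ▸ d.1.refl x)
      fun ⟨_, _, h'⟩ => h h', fun h _ _ hxy => h hxy⟩

theorem restrictIcc_surjective (hρ : ∀ x y, ρ x y ↔ x = y ∨ x ∈ B ∧ y ∈ B)
    (hext : ∀ σ : Con B, ∃ c : Con M, ∀ x y : M,
      c x y ↔ x = y ∨ ∃ hx : x ∈ B, ∃ hy : y ∈ B, σ ⟨x, hx⟩ ⟨y, hy⟩) :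
    Function.Surjective (restrictIcc fun x y => (hρ x y).1) := by
  intro σ
  obtain ⟨c, hc⟩ := hext σ
  refine ⟨⟨c, bot_le, fun x y h => (hρ x y).2 ?_⟩, Con.ext fun x y => ?_⟩
  · exact ((hc x y).1 h).imp_right fun ⟨hx, hy, _⟩ => ⟨hx, hy⟩
  · change c x y ↔ σ x y
    rw [hc]
    refine ⟨?_, fun h => Or.inr ⟨x.2, y.2, h⟩⟩
    rintro (h | ⟨_, _, h⟩)
    exacts [Subtype.ext h ▸ σ.refl x, h]

end Restrict

end Con

/-- Let `S` be a semigroup and `B` a subsemigroup with the diagonal congruence extension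
property: for every congruence `σ` of `B`, the relation `σ ∪ Δ_S` is a congruence of `S`.
Then `σ ↦ σ ∪ Δ_S` is a lattice isomorphism from `Cong(B)` onto the interval `[Δ_S, ρ_B]`
of `Cong(S)`, where `ρ_B = Δ_S ∪ (B × B)`; consequently
`Ht(Cong(S)) = Ht(Cong(B)) + Ht(Cong(S/ρ_B)) − 1`. -/
theorem deltaCEP_interval_iso_and_height {S : Type*} [Semigroup S] (B : Subsemigroup S)
    (hCEP : ∀ σ : Con B, ∃ c : Con S, ∀ x y : S,
        c x y ↔ x = y ∨ ∃ hx : x ∈ B, ∃ hy : y ∈ B, σ ⟨x, hx⟩ ⟨y, hy⟩)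
    (ρB : Con S) (hρB : ∀ x y : S, ρB x y ↔ x = y ∨ (x ∈ B ∧ y ∈ B)) :
    (∃ e : Con B ≃o ↥(Set.Icc (⊥ : Con S) ρB),
        ∀ (σ : Con B) (x y : S),
          (e σ : Con S) x y ↔ x = y ∨ ∃ hx : x ∈ B, ∃ hy : y ∈ B, σ ⟨x, hx⟩ ⟨y, hy⟩) ∧
    orderHeight (Con S) = orderHeight (Con B) + orderHeight (Con ρB.Quotient) - 1 := by
  have hsurj := Con.restrictIcc_surjective hρB hCEP
  let e := (OrderIso.ofSurjective _ hsurj).symm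
  refine ⟨⟨e, fun σ x y => ?_⟩, ?_⟩
  · have hσ : (e σ : Con S).restrict B = σ := (OrderIso.ofSurjective _ hsurj).apply_symm_apply σ
    rw [Con.rel_iff_of_le (fun x y => (hρB x y).1) (e σ).2.2, hσ]
  have hB : orderHeight (Con B) = (Iic ρB).chainHeight (· < ·) := by
    rw [orderHeight_congr e, orderHeight_coe, Icc_bot]
  have hQ : orderHeight (Con ρB.Quotient) = (Ici ρB).chainHeight (· < ·) :=
    (orderHeight_congr ρB.correspondence.symm).trans (orderHeight_coe (Ici ρB))
  have hsplit := chainHeight_univ_add_one_eq fun c d =>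
    Con.eq_of_le_of_inf_le_of_sup_le (c := c) (d := d) hρB
  rw [hB, hQ, ← hsplit, orderHeight]
  exact (ENat.addLECancellable_of_ne_top ENat.one_ne_top).add_tsub_cancel_right.symm
end

section
/- If L_1 and L_2 are L-classes of a semigroup S lying in the same D-class, then the principal factor left S-acts ᔆL̄_1 and ᔆL̄_2 are isomorphic: there is a bijection f : L_1 ∪ {0} → L_2 ∪ {0} with f(0) = 0 and f(s·x) = s·f(x) for all s ∈ S and all x. -/
open scoped Classical

/-- Green's preorder `≤_L`: `x ≤_L y` iff `x = y` or `x = a y` for some `a`. -/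
def leL {S : Type*} [Mul S] (x y : S) : Prop := x = y ∨ ∃ a : S, x = a * y

/-- Green's relation `L`. -/
def lrel {S : Type*} [Mul S] (x y : S) : Prop := leL x y ∧ leL y x

/-- Green's preorder `≤_R`: `x ≤_R y` iff `x = y` or `x = y a` for some `a`. -/
def leR {S : Type*} [Mul S] (x y : S) : Prop := x = y ∨ ∃ a : S, x = y * a

/-- Green's relation `R`. -/
def rrel {S : Type*} [Mul S] (x y : S) : Prop := leR x y ∧ leR y x

/-- Green's relation `D = L ∘ R`. -/
def drel {S : Type*} [Mul S] (x y : S) : Prop := ∃ z : S, lrel x z ∧ rrel z y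

/-- The principal factor act on `L ∪ {0}` (with `0 = none`). -/
noncomputable def pfAct {M A : Type*} (act : M → A → A) (L : Set A) (m : M) :
    Option ↥L → Option ↥L
  | none => none
  | some x => if h : act m ↑x ∈ L then some ⟨act m ↑x, h⟩ else none

/-
Green's lemma. Since `u L z` for some `z R v`, the principal factors of `u` and `z` live on the same
set, and we may assume `z = v a`, `v = z b`. Right translation `x ↦ x b` then maps `L_z` onto `L_v`
with inverse `y ↦ y a`, because `b a` fixes everything `≤_L z` on the right. Being a right
translation, it commutes with left multiplication, and since it is invertible on all of `S·z ∪ {z}`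
it also preserves whether `s x` falls into the `L`-class, which is what equivariance for the
principal factor asks for.
-/

def PFIsomorphic {S : Type*} [Mul S] (L₁ L₂ : Set S) : Prop :=
  ∃ f : Option L₁ ≃ Option L₂, f none = none ∧
    ∀ (s : S) (x : Option L₁),
      f (pfAct (fun s y => s * y) L₁ s x) = pfAct (fun s y => s * y) L₂ s (f x)

theorem PFIsomorphic.refl {S : Type*} [Mul S] (L : Set S) : PFIsomorphic L L :=
  ⟨Equiv.refl _, rfl, fun _ _ => rfl⟩

theorem pfAct_map_mul_right {S : Type*} [Semigroup S] {L₁ L₂ : Set S} {b : S} (F : L₁ → L₂)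
    (hF : ∀ x, (F x : S) = x * b) (hmem : ∀ (s : S) (x : L₁), s * x ∈ L₁ ↔ s * x * b ∈ L₂)
    (s : S) (x : Option L₁) :
    Option.map F (pfAct (fun s y => s * y) L₁ s x) =
      pfAct (fun s y => s * y) L₂ s (Option.map F x) := by
  rcases x with _ | x
  · rfl
  have hb : s * (F x : S) = s * x * b := by rw [hF, mul_assoc]
  by_cases h : s * (x : S) ∈ L₁
  · have h' : s * (F x : S) ∈ L₂ := hb ▸ (hmem s x).1 h
    simp only [pfAct, dif_pos h, dif_pos h', Option.map_some, Option.some.injEq]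
    exact Subtype.ext ((hF _).trans hb.symm)
  · have h' : s * (F x : S) ∉ L₂ := hb ▸ mt (hmem s x).2 h
    simp only [pfAct, Option.map_some, dif_neg h, dif_neg h', Option.map_none]

theorem PFIsomorphic.of_equiv_mul_right {S : Type*} [Semigroup S] {L₁ L₂ : Set S} {b : S}
    (e : L₁ ≃ L₂) (he : ∀ x, (e x : S) = x * b)
    (hmem : ∀ (s : S) (x : L₁), s * x ∈ L₁ ↔ s * x * b ∈ L₂) : PFIsomorphic L₁ L₂ :=
  ⟨e.optionCongr, rfl, pfAct_map_mul_right e he hmem⟩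

section Green

variable {S : Type*} [Semigroup S]

theorem leL_trans {x y z : S} (hxy : leL x y) (hyz : leL y z) : leL x z := by
  rcases hxy with rfl | ⟨a, rfl⟩
  · exact hyz
  rcases hyz with rfl | ⟨c, rfl⟩
  · exact Or.inr ⟨a, rfl⟩
  · exact Or.inr ⟨a * c, (mul_assoc a c z).symm⟩

theorem lrel_trans {x y z : S} (hxy : lrel x y) (hyz : lrel y z) : lrel x z :=
  ⟨leL_trans hxy.1 hyz.1, leL_trans hyz.2 hxy.2⟩

theorem lrel_symm {x y : S} (h : lrel x y) : lrel y x := ⟨h.2, h.1⟩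

theorem setOf_lrel_eq_of_lrel {x y : S} (h : lrel x y) : {w | lrel x w} = {w | lrel y w} :=
  Set.ext fun _ => ⟨lrel_trans (lrel_symm h), lrel_trans h⟩

theorem leL.mul_right {x y : S} (h : leL x y) (c : S) : leL (x * c) (y * c) := by
  rcases h with rfl | ⟨a, rfl⟩
  · exact Or.inl rfl
  · exact Or.inr ⟨a, mul_assoc a y c⟩

theorem lrel.mul_right {x y : S} (h : lrel x y) (c : S) : lrel (x * c) (y * c) :=
  ⟨h.1.mul_right c, h.2.mul_right c⟩

theorem mul_mul_eq_self_of_leL {x z b a : S} (hz : z * b * a = z) (hx : leL x z) :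
    x * b * a = x := by
  rcases hx with rfl | ⟨c, rfl⟩
  · exact hz
  · rw [mul_assoc c, mul_assoc c, hz]

variable {z v a b : S}

def lclassMulRight (hz : z = v * a) (hv : v = z * b) : {w | lrel z w} ≃ {w | lrel v w} where
  toFun x := ⟨x * b, hv ▸ x.2.mul_right b⟩
  invFun y := ⟨y * a, hz ▸ y.2.mul_right a⟩
  left_inv x := Subtype.ext <| mul_mul_eq_self_of_leL (by rw [← hv, ← hz]) x.2.2
  right_inv y := Subtype.ext <| mul_mul_eq_self_of_leL (by rw [← hz, ← hv]) y.2.2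

theorem lrel_iff_lrel_mul_right (hz : z = v * a) (hv : v = z * b) {w : S} (hw : w * b * a = w) :
    lrel z w ↔ lrel v (w * b) :=
  ⟨fun h => hv ▸ h.mul_right b, fun h => hz ▸ hw ▸ h.mul_right a⟩

theorem pfIsomorphic_of_eq_mul_of_eq_mul (hz : z = v * a) (hv : v = z * b) :
    PFIsomorphic {w | lrel z w} {w | lrel v w} := by
  refine .of_equiv_mul_right (lclassMulRight hz hv) (fun _ => rfl) fun s x => ?_
  have hfix : s * x * b * a = s * x := by
    rw [mul_assoc s, mul_assoc s, mul_mul_eq_self_of_leL (by rw [← hv, ← hz]) x.2.2]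
  exact lrel_iff_lrel_mul_right hz hv hfix

theorem pfIsomorphic_of_rrel (h : rrel z v) : PFIsomorphic {w | lrel z w} {w | lrel v w} := by
  obtain ⟨rfl | ⟨a, hz⟩, hvz⟩ := h
  · exact .refl _
  obtain rfl | ⟨b, hv⟩ := hvz
  · exact .refl _
  · exact pfIsomorphic_of_eq_mul_of_eq_mul hz hv

end Green

/-- If the `L`-classes of `u` and of `v` in a semigroup `S` lie in the same `D`-class
(i.e. `u D v`), then the principal factor left `S`-acts on `L_u ∪ {0}` and `L_v ∪ {0}`
are isomorphic: there is a bijection `f` with `f 0 = 0` and `f (s · x) = s · f x`. -/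
theorem principal_factors_isomorphic_of_drel {S : Type*} [Semigroup S]
    (u v : S) (huv : drel u v) :
    ∃ f : Option ↥{z | lrel u z} ≃ Option ↥{z | lrel v z},
      f none = none ∧
      ∀ (s : S) (x : Option ↥{z | lrel u z}),
        f (pfAct (fun s y => s * y) {z | lrel u z} s x) =
          pfAct (fun s y => s * y) {z | lrel v z} s (f x) := by
  obtain ⟨z, huz, hzv⟩ := huv
  rw [setOf_lrel_eq_of_lrel huz]
  exact pfIsomorphic_of_rrel hzv
end
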